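/- Size of the approximating set under the canonical parameter choices: Set w = k/(2ζn), ε = 1/sqrt(k), and s = ⌊log(n/k)/log((1−α)^{-1})⌋ + 1, where 0 < α < 0.5 and ζ ≥ 1 are fixed constants, and let R_{s,w,ε} = ∪_{S ⊆ {1,...,d}, |S| = s} R_{S,w,ε} be the union of the approximating rectangle sets over all size-s supports. Then along any sequence of problems (n, d, k), log(|R_{s,w,ε}|) ≤ log(n/k)·(log(dk) + 3·log log(n)) / log((1−α)^{-1}) + O(log(max{n, d})). -/
import Mathlib


open Filter
open scoped Classical

namespace AdaptiveConcentration

/-- An axis-aligned rectangle in `ℝ^d`, given by its lower-left and upper-right corners. -/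
structure Rect (d : ℕ) where
  lo : Fin d → ℝ
  hi : Fin d → ℝ

/-- `R` is a genuine rectangle contained in `[0,1]^d`. -/
def Rect.IsValid {d : ℕ} (R : Rect d) : Prop :=
  ∀ j, 0 ≤ R.lo j ∧ R.lo j < R.hi j ∧ R.hi j ≤ 1

/-- The subset of `ℝ^d` described by the rectangle. -/
def Rect.toSet {d : ℕ} (R : Rect d) : Set (Fin d → ℝ) :=
  {x | ∀ j, R.lo j ≤ x j ∧ x j ≤ R.hi j}

/-- The Lebesgue measure of the rectangle: `λ(R) = ∏_j (r_j^+ − r_j^-)`. -/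
noncomputable def Rect.vol {d : ℕ} (R : Rect d) : ℝ :=
  ∏ j, (R.hi j - R.lo j)

/-- The support of a rectangle: `S(R) = {j : r_j^- ≠ 0 or r_j^+ ≠ 1}`. -/
noncomputable def Rect.supp {d : ℕ} (R : Rect d) : Finset (Fin d) :=
  Finset.univ.filter fun j => R.lo j ≠ 0 ∨ R.hi j ≠ 1

/-- `RR` is an `ε`-approximating set for all rectangles with support contained in `S` and
volume at least `w`. -/
def ApproxFor {d : ℕ} (S : Finset (Fin d)) (w ε : ℝ) (RR : Finset (Rect d)) : Prop :=
  ∀ R : Rect d, R.IsValid → R.supp ⊆ S → w ≤ R.vol →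
    ∃ Rm ∈ RR, ∃ Rp ∈ RR, Rm.toSet ⊆ R.toSet ∧ R.toSet ⊆ Rp.toSet ∧
      Real.exp (-ε) * Rp.vol ≤ R.vol ∧ R.vol ≤ Real.exp ε * Rm.vol

set_option maxHeartbeats 3200000 in
/-- **Size of the approximating set under the canonical parameter choices.**
Set `w = k/(2ζn)`, `ε = 1/√k` and `s = ⌊log(n/k)/log((1−α)⁻¹)⌋ + 1`, with `0 < α < 1/2` and
`ζ ≥ 1` fixed.  Let `R_{s,w,ε} = ∪_{|S|=s} R_{S,w,ε}` be the union over all size-`s` supports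
of approximating sets, each satisfying the approximation property and the cardinality bound
`|R_{S,w,ε}| ≤ (1/w)·((8s²/ε²)·(1 + log₂⌊1/w⌋))^s·(1 + O(ε))`.  Then along any sequence of
problems `(n, d n, k n)`,
`log|R_{s,w,ε}| ≤ log(n/k)·(log(dk) + 3·log log n)/log((1−α)⁻¹) + O(log max{n, d})`. -/
theorem approximating_set_size
    (d k : ℕ → ℕ) (α ζ : ℝ) (hα : 0 < α) (hα' : α < 1/2) (hζ : 1 ≤ ζ)
    (hk1 : ∀ n, 1 ≤ k n) (hkn : ∀ n, k n ≤ n)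
    (hd : Tendsto d atTop atTop) (hk : Tendsto k atTop atTop)
    (hscale : Tendsto
      (fun n : ℕ => Real.log (n : ℝ) * max (Real.log (d n : ℝ)) (Real.log (Real.log (n : ℝ))) / (k n : ℝ))
      atTop (nhds 0))
    (s : ℕ → ℕ) (hs : ∀ n, s n = ⌊Real.log ((n : ℝ) / (k n : ℝ)) / Real.log ((1 - α)⁻¹)⌋₊ + 1)
    (w ε : ℕ → ℝ)
    (hw : ∀ n, w n = (k n : ℝ) / (2 * ζ * (n : ℝ)))
    (hε : ∀ n, ε n = 1 / Real.sqrt (k n))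
    (RS : ∀ n, Finset (Fin (d n)) → Finset (Rect (d n)))
    (happrox : ∀ n, ∀ S : Finset (Fin (d n)), S.card = s n → ApproxFor S (w n) (ε n) (RS n S))
    (hcard : ∃ C : ℝ, 0 ≤ C ∧ ∀ᶠ n in atTop, ∀ S : Finset (Fin (d n)), S.card = s n →
      ((RS n S).card : ℝ) ≤ (1 / w n) *
        ((8 * (s n : ℝ) ^ 2 / (ε n) ^ 2) * (1 + Real.logb 2 (⌊1 / w n⌋₊ : ℝ))) ^ (s n) *
        (1 + C * ε n))
    (RR : ∀ n, Finset (Rect (d n)))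
    (hunion : ∀ n, RR n = (Finset.univ.powersetCard (s n)).biUnion (RS n)) :
    ∃ C' : ℝ, ∀ᶠ n in atTop,
      Real.log ((RR n).card : ℝ) ≤
        Real.log ((n : ℝ) / (k n : ℝ)) *
            (Real.log ((d n : ℝ) * (k n : ℝ)) + 3 * Real.log (Real.log (n : ℝ))) /
          Real.log ((1 - α)⁻¹) +
        C' * Real.log (max (n : ℝ) (d n : ℝ)) := by
  classical
  obtain ⟨C, hC0, hcardev⟩ := hcard
  have h1α : (0:ℝ) < 1 - α := by linarith
  set c := Real.log ((1 - α)⁻¹) with hcdef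
  have hc0 : 0 < c := Real.log_pos (one_lt_inv_iff₀.mpr ⟨h1α, by linarith⟩)
  have hlog2pos : (0:ℝ) < Real.log 2 := Real.log_pos one_lt_two
  have hζ0 : (0:ℝ) < ζ := by linarith
  have hlog2ζ : 0 ≤ Real.log (2 * ζ) := Real.log_nonneg (by linarith)
  set β : ℝ := (Real.log (2 * ζ) + 1) / Real.log 2 with hβdef
  have hβ0 : 0 ≤ β := by positivity
  set A : ℝ := 32 * (1 + β) / c ^ 2 with hAdef
  have hApos : 0 < A := by positivity
  set a : ℝ := max 0 (Real.log A) with hadef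
  have ha0 : 0 ≤ a := le_max_left _ _
  refine ⟨2 * a / c + (Real.log (2 * ζ) + 1) + Real.log (1 + C) + 5, ?_⟩
  have hlogn : Tendsto (fun n : ℕ => Real.log n) atTop atTop :=
    Real.tendsto_log_atTop.comp tendsto_natCast_atTop_atTop
  filter_upwards [eventually_ge_atTop 3, hlogn.eventually_ge_atTop (max 1 c),
    hd.eventually_ge_atTop 1, hcardev] with n hn3 hlogn' hd1 hcn
  -- basic positivity facts
  have hn0 : (0:ℝ) < (n:ℝ) := by exact_mod_cast (by omega : 0 < n)
  have hk0 : (0:ℝ) < (k n : ℝ) := by exact_mod_cast hk1 n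
  have hk1' : (1:ℝ) ≤ (k n : ℝ) := by exact_mod_cast hk1 n
  have hd0 : (0:ℝ) < (d n : ℝ) := by exact_mod_cast hd1
  have hd1' : (1:ℝ) ≤ (d n : ℝ) := by exact_mod_cast hd1
  have hkn' : (k n : ℝ) ≤ (n:ℝ) := by exact_mod_cast hkn n
  have hlog1 : 1 ≤ Real.log n := le_trans (le_max_left 1 c) hlogn'
  have hlogc : c ≤ Real.log n := le_trans (le_max_right 1 c) hlogn'
  set L : ℝ := Real.log ((n:ℝ) / (k n : ℝ)) with hLdef
  have hL0 : 0 ≤ L := Real.log_nonneg ((one_le_div hk0).mpr hkn')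
  have hLlogn : L ≤ Real.log n :=
    Real.log_le_log (by positivity) (div_le_self hn0.le hk1')
  -- bounds on s
  have hs1 : 1 ≤ s n := by rw [hs]; omega
  have hs0 : (0:ℝ) ≤ (s n : ℝ) := by positivity
  have hsle : (s n : ℝ) ≤ L / c + 1 := by
    rw [hs n]
    push_cast
    have := Nat.floor_le (show (0:ℝ) ≤ L / c by positivity)
    linarith
  have hsle2 : (s n : ℝ) ≤ 2 * Real.log n / c := by
    have h1 : L / c ≤ Real.log n / c := by gcongr
    have h2 : (1:ℝ) ≤ Real.log n / c := (one_le_div hc0).mpr hlogc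
    calc (s n : ℝ) ≤ L / c + 1 := hsle
      _ ≤ Real.log n / c + Real.log n / c := by linarith
      _ = 2 * Real.log n / c := by ring
  -- facts about w
  have hw1 : 1 / w n = 2 * ζ * (n:ℝ) / (k n : ℝ) := by rw [hw n, one_div_div]
  have hwge2 : (2:ℝ) ≤ 1 / w n := by
    rw [hw1, le_div_iff₀ hk0]
    nlinarith only [hζ, hkn', hk0, hn0]
  have hwpos : (0:ℝ) < 1 / w n := by linarith
  have hfl1 : (1:ℝ) ≤ (⌊1 / w n⌋₊ : ℝ) := by
    exact_mod_cast Nat.le_floor (by push_cast; linarith : ((1:ℕ):ℝ) ≤ 1 / w n)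
  have hflpos : (0:ℝ) < (⌊1 / w n⌋₊ : ℝ) := by linarith
  have hfl : (⌊1 / w n⌋₊ : ℝ) ≤ 1 / w n := Nat.floor_le hwpos.le
  -- logb bound
  have hlogb0 : 0 ≤ Real.logb 2 (⌊1 / w n⌋₊ : ℝ) := Real.logb_nonneg one_lt_two hfl1
  have hlogble : Real.logb 2 (⌊1 / w n⌋₊ : ℝ) ≤ (Real.log (2 * ζ) + Real.log n) / Real.log 2 := by
    have h1 : (⌊1 / w n⌋₊ : ℝ) ≤ 2 * ζ * (n:ℝ) := by
      refine hfl.trans ?_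
      rw [hw1]
      exact div_le_self (by nlinarith only [mul_pos hζ0 hn0]) hk1'
    have h2 : Real.logb 2 (⌊1 / w n⌋₊ : ℝ) ≤ Real.logb 2 (2 * ζ * (n:ℝ)) :=
      Real.logb_le_logb_of_le one_lt_two hflpos h1
    have h3 : Real.logb 2 (2 * ζ * (n:ℝ)) = (Real.log (2 * ζ) + Real.log n) / Real.log 2 := by
      rw [Real.logb, Real.log_mul (by nlinarith only [hζ0] : (0:ℝ) < 2 * ζ).ne' hn0.ne']
    linarith
  have hinnerfac : 1 + Real.logb 2 (⌊1 / w n⌋₊ : ℝ) ≤ (1 + β) * Real.log n := by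
    have hβ2 : β * Real.log 2 = Real.log (2 * ζ) + 1 := div_mul_cancel₀ _ hlog2pos.ne'
    have h1 : (Real.log (2 * ζ) + Real.log n) / Real.log 2 ≤ β * Real.log n := by
      rw [div_le_iff₀ hlog2pos]
      have e : β * Real.log n * Real.log 2 = (Real.log (2 * ζ) + 1) * Real.log n := by
        rw [← hβ2]; ring
      have e2 : 0 ≤ Real.log (2 * ζ) * (Real.log n - 1) :=
        mul_nonneg hlog2ζ (by linarith only [hlog1])
      nlinarith only [e, e2]
    linarith only [hlogble, h1, hlog1]
  -- the inner factor
  set innr : ℝ := 8 * (s n : ℝ) ^ 2 / (ε n) ^ 2 * (1 + Real.logb 2 (⌊1 / w n⌋₊ : ℝ))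
    with hinnerdef
  have hε2 : (ε n) ^ 2 = 1 / (k n : ℝ) := by
    rw [hε n, div_pow, one_pow, Real.sq_sqrt hk0.le]
  have hinner_eq : innr = 8 * (s n : ℝ) ^ 2 * (k n : ℝ) * (1 + Real.logb 2 (⌊1 / w n⌋₊ : ℝ)) := by
    rw [hinnerdef, hε2]
    field_simp
  have hinner1 : (1:ℝ) ≤ innr := by
    rw [hinner_eq]
    have h1 : (1:ℝ) ≤ (s n : ℝ) := by exact_mod_cast hs1
    have a1 : (1:ℝ) ≤ 8 * (s n : ℝ) ^ 2 := by nlinarith only [h1]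
    have a2 : (1:ℝ) * 1 ≤ (8 * (s n : ℝ) ^ 2) * (k n : ℝ) :=
      mul_le_mul a1 hk1' zero_le_one (by linarith only [a1])
    have a3 : (1:ℝ) * 1 ≤ (8 * (s n : ℝ) ^ 2 * (k n : ℝ)) * (1 + Real.logb 2 (⌊1 / w n⌋₊ : ℝ)) :=
      mul_le_mul (by linarith only [a2]) (by linarith only [hlogb0]) zero_le_one
        (by linarith only [a2])
    linarith only [a3]
  have hinner_pos : (0:ℝ) < innr := lt_of_lt_of_le one_pos hinner1
  have hinnerle : innr ≤ A * (k n : ℝ) * Real.log n ^ 3 := by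
    rw [hinner_eq]
    have h1 : (0:ℝ) ≤ 1 + Real.logb 2 (⌊1 / w n⌋₊ : ℝ) := by linarith
    have hsq : (s n : ℝ) ^ 2 ≤ (2 * Real.log n / c) ^ 2 := pow_le_pow_left₀ hs0 hsle2 2
    have h2 : 8 * (s n : ℝ) ^ 2 * (k n : ℝ) ≤ 8 * (2 * Real.log n / c) ^ 2 * (k n : ℝ) := by
      linarith only [mul_le_mul_of_nonneg_right hsq hk0.le]
    have h3 : (0:ℝ) ≤ 8 * (2 * Real.log n / c) ^ 2 * (k n : ℝ) := by positivity
    calc 8 * (s n : ℝ) ^ 2 * (k n : ℝ) * (1 + Real.logb 2 (⌊1 / w n⌋₊ : ℝ))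
        ≤ 8 * (2 * Real.log n / c) ^ 2 * (k n : ℝ) * ((1 + β) * Real.log n) :=
          mul_le_mul h2 hinnerfac h1 h3
      _ = A * (k n : ℝ) * Real.log n ^ 3 := by rw [hAdef]; ring
  have hloginner : Real.log innr ≤
      Real.log A + Real.log (k n : ℝ) + 3 * Real.log (Real.log n) := by
    have h1 : Real.log innr ≤ Real.log (A * (k n : ℝ) * Real.log n ^ 3) :=
      Real.log_le_log hinner_pos hinnerle
    have hln0 : (0:ℝ) < Real.log n := by linarith only [hlog1]
    rw [Real.log_mul (mul_pos hApos hk0).ne' (pow_pos hln0 3).ne',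
      Real.log_mul hApos.ne' hk0.ne', Real.log_pow] at h1
    push_cast at h1
    linarith only [h1]
  -- the per-support bound B
  set B : ℝ := (1 / w n) * innr ^ (s n) * (1 + C * ε n) with hBdef
  have hεpos : 0 < ε n := by rw [hε n]; positivity
  have hε1 : ε n ≤ 1 := by
    rw [hε n, div_le_one (by positivity : (0:ℝ) < Real.sqrt (k n))]
    nlinarith only [Real.sq_sqrt hk0.le, Real.sqrt_nonneg ((k n : ℝ)), hk1']
  have hCε1 : (1:ℝ) ≤ 1 + C * ε n := by
    linarith only [mul_nonneg hC0 hεpos.le]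
  have hpow1 : (1:ℝ) ≤ innr ^ (s n) := by
    calc (1:ℝ) = 1 ^ (s n) := (one_pow _).symm
      _ ≤ innr ^ (s n) := pow_le_pow_left₀ zero_le_one hinner1 _
  have hB1 : (1:ℝ) ≤ B := by
    rw [hBdef]
    have b1 : (1:ℝ) * 1 ≤ (1 / w n) * innr ^ (s n) :=
      mul_le_mul (by linarith only [hwge2]) hpow1 zero_le_one (by linarith only [hwge2])
    have b2 : (1:ℝ) * 1 ≤ ((1 / w n) * innr ^ (s n)) * (1 + C * ε n) :=
      mul_le_mul (by linarith only [b1]) hCε1 zero_le_one (by linarith only [b1])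
    linarith only [b2]
  have hBpos : (0:ℝ) < B := by linarith
  -- cardinality bound
  have hRRle : ((RR n).card : ℝ) ≤ (d n : ℝ) ^ (s n) * B := by
    have hnat : (RR n).card ≤
        ∑ S ∈ Finset.powersetCard (s n) (Finset.univ : Finset (Fin (d n))), (RS n S).card := by
      rw [hunion n]; exact Finset.card_biUnion_le
    have hsum : ((RR n).card : ℝ) ≤
        ∑ S ∈ Finset.powersetCard (s n) (Finset.univ : Finset (Fin (d n))),
          ((RS n S).card : ℝ) := by exact_mod_cast hnat
    have hsum2 : ∑ S ∈ Finset.powersetCard (s n) (Finset.univ : Finset (Fin (d n))),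
        ((RS n S).card : ℝ) ≤
        (Finset.powersetCard (s n) (Finset.univ : Finset (Fin (d n)))).card • B := by
      refine Finset.sum_le_card_nsmul _ _ _ (fun S hS => ?_)
      exact hcn S (Finset.mem_powersetCard_univ.mp hS)
    rw [Finset.card_powersetCard, Finset.card_univ, Fintype.card_fin, nsmul_eq_mul] at hsum2
    have hch : (((d n).choose (s n) : ℕ) : ℝ) ≤ (d n : ℝ) ^ (s n) := by
      have := Nat.choose_le_pow (d n) (s n)
      exact_mod_cast this
    have h5 := mul_le_mul_of_nonneg_right hch hBpos.le
    linarith only [hsum, hsum2, h5]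
  -- take logs
  have hdpow1 : (1:ℝ) ≤ (d n : ℝ) ^ (s n) := by
    calc (1:ℝ) = 1 ^ (s n) := (one_pow _).symm
      _ ≤ (d n : ℝ) ^ (s n) := pow_le_pow_left₀ zero_le_one hd1' _
  have hlogcard : Real.log ((RR n).card : ℝ) ≤
      (s n : ℝ) * Real.log (d n : ℝ) + Real.log B := by
    have h0 : Real.log ((RR n).card : ℝ) ≤ Real.log ((d n : ℝ) ^ (s n) * B) := by
      rcases Nat.eq_zero_or_pos (RR n).card with h | h
      · rw [h]
        simp only [Nat.cast_zero, Real.log_zero]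
        have b3 : (1:ℝ) * 1 ≤ (d n : ℝ) ^ (s n) * B :=
          mul_le_mul hdpow1 hB1 zero_le_one (by linarith only [hdpow1])
        exact Real.log_nonneg (by linarith only [b3])
      · exact Real.log_le_log (by exact_mod_cast h) hRRle
    rw [Real.log_mul (by positivity) hBpos.ne', Real.log_pow] at h0
    push_cast at h0
    linarith only [h0]
  have hlogB : Real.log B =
      Real.log (1 / w n) + (s n : ℝ) * Real.log innr + Real.log (1 + C * ε n) := by
    rw [hBdef, Real.log_mul (by positivity) (by linarith : (0:ℝ) < 1 + C * ε n).ne',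
      Real.log_mul hwpos.ne' (by positivity : (0:ℝ) < innr ^ (s n)).ne', Real.log_pow]
  -- bounds for the pieces
  set M : ℝ := Real.log (max (n:ℝ) (d n : ℝ)) with hMdef
  have hnM : Real.log n ≤ M := Real.log_le_log hn0 (le_max_left _ _)
  have hdM : Real.log (d n : ℝ) ≤ M := Real.log_le_log hd0 (le_max_right _ _)
  have hM1 : 1 ≤ M := le_trans hlog1 hnM
  have hkM : Real.log (k n : ℝ) ≤ M := le_trans (Real.log_le_log hk0 hkn') hnM
  have hllM : Real.log (Real.log n) ≤ M := by
    have := Real.log_le_sub_one_of_pos (show (0:ℝ) < Real.log n by linarith)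
    linarith
  have hll0 : 0 ≤ Real.log (Real.log n) := Real.log_nonneg hlog1
  have hlogdk : Real.log ((d n : ℝ) * (k n : ℝ)) = Real.log (d n : ℝ) + Real.log (k n : ℝ) :=
    Real.log_mul hd0.ne' hk0.ne'
  have hlogd0 : 0 ≤ Real.log (d n : ℝ) := Real.log_nonneg hd1'
  have hlogk0 : 0 ≤ Real.log (k n : ℝ) := Real.log_nonneg hk1'
  have hT1 : Real.log (1 / w n) ≤ (Real.log (2 * ζ) + 1) * M := by
    have h1 : Real.log (1 / w n) ≤ Real.log (2 * ζ * (n:ℝ)) := by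
      rw [hw1]
      exact Real.log_le_log (div_pos (by nlinarith only [mul_pos hζ0 hn0]) hk0)
        (div_le_self (by nlinarith only [mul_pos hζ0 hn0]) hk1')
    rw [Real.log_mul (by nlinarith only [hζ0] : (0:ℝ) < 2 * ζ).ne' hn0.ne'] at h1
    linarith only [h1, hnM, mul_le_mul_of_nonneg_left hM1 hlog2ζ]
  have hT2 : (s n : ℝ) * Real.log innr ≤
      (s n : ℝ) * (Real.log A + Real.log (k n : ℝ) + 3 * Real.log (Real.log n)) :=
    mul_le_mul_of_nonneg_left hloginner hs0
  have hT3 : Real.log (1 + C * ε n) ≤ Real.log (1 + C) * M := by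
    have h1 : Real.log (1 + C * ε n) ≤ Real.log (1 + C) :=
      Real.log_le_log (by linarith only [hCε1])
        (by linarith only [mul_le_mul_of_nonneg_left hε1 hC0])
    have h2 : 0 ≤ Real.log (1 + C) := Real.log_nonneg (by linarith only [hC0])
    linarith only [h1, h2, mul_le_mul_of_nonneg_left hM1 h2]
  have hsa : (s n : ℝ) * Real.log A ≤ (2 * a / c) * M := by
    have h1 : (s n : ℝ) * Real.log A ≤ (s n : ℝ) * a :=
      mul_le_mul_of_nonneg_left (le_max_right 0 _) hs0
    have h2 : (s n : ℝ) * a ≤ (2 * Real.log n / c) * a :=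
      mul_le_mul_of_nonneg_right hsle2 ha0
    have h3 : (2 * Real.log n / c) * a ≤ (2 * M / c) * a := by gcongr
    have h4 : (2 * M / c) * a = (2 * a / c) * M := by ring
    linarith only [h1, h2, h3, h4]
  have hX0 : 0 ≤ Real.log ((d n : ℝ) * (k n : ℝ)) + 3 * Real.log (Real.log n) := by
    rw [hlogdk]; linarith only [hlogd0, hlogk0, hll0]
  have hmain : (s n : ℝ) * (Real.log ((d n : ℝ) * (k n : ℝ)) + 3 * Real.log (Real.log n)) ≤
      L * (Real.log ((d n : ℝ) * (k n : ℝ)) + 3 * Real.log (Real.log n)) / c + 5 * M := by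
    have h1 : (s n : ℝ) * (Real.log ((d n : ℝ) * (k n : ℝ)) + 3 * Real.log (Real.log n)) ≤
        (L / c + 1) * (Real.log ((d n : ℝ) * (k n : ℝ)) + 3 * Real.log (Real.log n)) :=
      mul_le_mul_of_nonneg_right hsle hX0
    have h2 : Real.log ((d n : ℝ) * (k n : ℝ)) + 3 * Real.log (Real.log n) ≤ 5 * M := by
      rw [hlogdk]; linarith only [hdM, hkM, hllM]
    have h3 : (L / c + 1) * (Real.log ((d n : ℝ) * (k n : ℝ)) + 3 * Real.log (Real.log n)) =
        L * (Real.log ((d n : ℝ) * (k n : ℝ)) + 3 * Real.log (Real.log n)) / c +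
        (Real.log ((d n : ℝ) * (k n : ℝ)) + 3 * Real.log (Real.log n)) := by ring
    linarith only [h1, h2, h3, hL0, hc0]
  have e1 : (s n : ℝ) * Real.log (d n : ℝ) +
      (s n : ℝ) * (Real.log A + Real.log (k n : ℝ) + 3 * Real.log (Real.log n)) =
      (s n : ℝ) * (Real.log ((d n : ℝ) * (k n : ℝ)) + 3 * Real.log (Real.log n)) +
      (s n : ℝ) * Real.log A := by
    rw [hlogdk]; ring
  have e3 : (2 * a / c + (Real.log (2 * ζ) + 1) + Real.log (1 + C) + 5) * M =
      (2 * a / c) * M + (Real.log (2 * ζ) + 1) * M + Real.log (1 + C) * M + 5 * M := by ring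
  linarith only [hlogcard, hlogB, hT1, hT2, hT3, e1, hmain, hsa, e3]

end AdaptiveConcentration
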